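/- Let A, B be n×n positive definite matrices and a, b > 0. Then a²A + b²B + 2ab(A # B) = W_{a,b}(A,B) if and only if A and B commute. (The key step: if Y is an invertible complex matrix with 2|Y| = Y + Y*, then Y is positive definite.) -/

import Mathlib

open Matrix ComplexOrder

namespace Matrix.PosSemidef

variable {m 𝕜 : Type*} [Fintype m] [DecidableEq m] [RCLike 𝕜]

/-- The positive semidefinite square root of a positive semidefinite matrix
(the definition of Mathlib, December 2024, removed since). -/
noncomputable def sqrt {A : Matrix m m 𝕜} (hA : PosSemidef A) : Matrix m m 𝕜 :=
  hA.1.eigenvectorUnitary.1 * diagonal ((↑) ∘ (√·) ∘ hA.1.eigenvalues) *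
  (star hA.1.eigenvectorUnitary : Matrix m m 𝕜)

lemma posSemidef_sqrt {A : Matrix m m 𝕜} (hA : PosSemidef A) : PosSemidef hA.sqrt := by
  apply PosSemidef.mul_mul_conjTranspose_same
  refine posSemidef_diagonal_iff.mpr fun i ↦ ?_
  rw [Function.comp_apply, RCLike.nonneg_iff]
  constructor
  · simp only [RCLike.ofReal_re]
    exact Real.sqrt_nonneg _
  · simp only [RCLike.ofReal_im]

end Matrix.PosSemidef

namespace Heron

variable {n : ℕ}

def WeakMaj {n : ℕ} (x y : Fin n → ℝ) : Prop :=
  ∀ s : Finset (Fin n), ∃ t : Finset (Fin n),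
    t.card = s.card ∧ ∑ i ∈ s, x i ≤ ∑ i ∈ t, y i

def Maj {n : ℕ} (x y : Fin n → ℝ) : Prop :=
  WeakMaj x y ∧ ∑ i, x i = ∑ i, y i

lemma sandwich_posSemidef {S T : Matrix (Fin n) (Fin n) ℂ} (hS : S.IsHermitian)
    (hT : T.PosSemidef) : (S * T * S).PosSemidef := by
  have h := hT.mul_mul_conjTranspose_same S
  rwa [hS.eq] at h

noncomputable def geomMean {A B : Matrix (Fin n) (Fin n) ℂ}
    (hA : A.PosDef) (hB : B.PosDef) : Matrix (Fin n) (Fin n) ℂ :=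
  hA.posSemidef.sqrt *
    (sandwich_posSemidef hA.posSemidef.posSemidef_sqrt.isHermitian.inv
        hB.posSemidef).sqrt *
    hA.posSemidef.sqrt

lemma geomMean_posSemidef {A B : Matrix (Fin n) (Fin n) ℂ}
    (hA : A.PosDef) (hB : B.PosDef) : (geomMean hA hB).PosSemidef :=
  sandwich_posSemidef hA.posSemidef.posSemidef_sqrt.isHermitian
    (Matrix.PosSemidef.posSemidef_sqrt _)

noncomputable def specMean {A B : Matrix (Fin n) (Fin n) ℂ}
    (hA : A.PosDef) (hB : B.PosDef) : Matrix (Fin n) (Fin n) ℂ :=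
  (geomMean_posSemidef hA.inv hB).sqrt * A * (geomMean_posSemidef hA.inv hB).sqrt

def HasPosSpectrum (M : Matrix (Fin n) (Fin n) ℂ) : Prop :=
  ∀ z ∈ spectrum ℂ M, 0 < z.re ∧ z.im = 0

def IsPrincipalSqrt (M S : Matrix (Fin n) (Fin n) ℂ) : Prop :=
  S * S = M ∧ HasPosSpectrum S

noncomputable def absMat (Y : Matrix (Fin n) (Fin n) ℂ) : Matrix (Fin n) (Fin n) ℂ :=
  (Matrix.posSemidef_conjTranspose_mul_self Y).sqrt

noncomputable def posPart (H : Matrix (Fin n) (Fin n) ℂ) : Matrix (Fin n) (Fin n) ℂ :=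
  ((1 : ℂ) / 2) • (absMat H + H)


end Heron

/-! A matrix with spectrum in the open right half-line is determined by its square: if
`X² = Y²` then `X (X - Y) = (X - Y) (-Y)`, and a Sylvester equation whose coefficients have
disjoint spectra has only the trivial solution. So the principal roots `S`, `T` of `AB` and
`BA` satisfy `T = Sᴴ = A⁻¹ S A`, and when `A` and `B` commute both equal `A # B`.

Conversely, equality means `S + Sᴴ = 2 (A # B)`. With `A # B = R Q R`, `R = A^{1/2}`,
`Q = (R⁻¹ B R⁻¹)^{1/2}`, the matrix `Y = R⁻¹ S R⁻¹` has `Yᴴ Y = Q²` and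
`Y + Yᴴ = 2 Q = 2 |Y|`. For such a `Y`, `K = Y - |Y|` is skew-Hermitian and `|Y|² = Yᴴ Y`
unfolds to `K² = |Y| K - K |Y|`, so `tr (Kᴴ K) = 0` and `Y = |Y|`. Hence `S = A # B` is
Hermitian and `AB = S² = (Sᴴ)² = BA`. -/

open Polynomial

theorem SemiconjBy.aeval {R A : Type*} [CommSemiring R] [Semiring A] [Algebra R A]
    {d x y : A} (h : SemiconjBy d x y) (p : R[X]) :
    SemiconjBy d (aeval x p) (aeval y p) := by
  induction p using Polynomial.induction_on' with
  | add p q hp hq => simpa only [map_add] using hp.add_right hq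
  | monomial k c =>
    simp only [aeval_monomial]
    exact SemiconjBy.mul_right (Algebra.commutes c d).symm (h.pow_right k)

theorem Matrix.eq_zero_of_semiconjBy_of_disjoint_spectrum {ι K : Type*} [Fintype ι]
    [DecidableEq ι] [Field K] [IsAlgClosed K] {D X Y : Matrix ι ι K} (h : SemiconjBy D X Y)
    (hXY : Disjoint (spectrum K X) (spectrum K Y)) : D = 0 := by
  cases isEmpty_or_nonempty ι
  · exact Subsingleton.elim _ _
  have hunit : IsUnit (aeval X Y.charpoly) := by
    rw [← spectrum.zero_notMem_iff K, spectrum.map_polynomial_aeval_of_degree_pos _ _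
      (by simp [charpoly_degree_eq_dim, Fintype.card_pos])]
    rintro ⟨μ, hμX, hμY⟩
    exact hXY.ne_of_mem hμX (mem_spectrum_iff_isRoot_charpoly.mpr hμY) rfl
  have : D * aeval X Y.charpoly = 0 := by
    rw [(h.aeval _).eq, aeval_self_charpoly, zero_mul]
  simpa using hunit.mul_left_eq_zero.mp this

theorem Matrix.eq_zero_of_conjTranspose_eq_neg_of_mul_self_eq_commutator {ι R : Type*}
    [Fintype ι] [CommRing R] [PartialOrder R] [StarRing R] [StarOrderedRing R]
    [NoZeroDivisors R] {K P : Matrix ι ι R} (hK : Kᴴ = -K) (h : K * K = P * K - K * P) :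
    K = 0 := by
  rw [← trace_conjTranspose_mul_self_eq_zero_iff, hK, Matrix.neg_mul, trace_neg, h,
    trace_sub, trace_mul_comm, sub_self, neg_zero]

namespace Matrix.PosSemidef

variable {m 𝕜 : Type*} [Fintype m] [DecidableEq m] [RCLike 𝕜] {A B : Matrix m m 𝕜}

open scoped MatrixOrder in
theorem sqrt_eq_cfc_sqrt (hA : PosSemidef A) : hA.sqrt = CFC.sqrt A := by
  rw [CFC.sqrt_eq_real_sqrt A hA.nonneg, cfcₙ_eq_cfc, hA.1.cfc_eq, IsHermitian.cfc,
    Unitary.conjStarAlgAut_apply]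
  rfl

open scoped MatrixOrder in
theorem sqrt_mul_self (hA : PosSemidef A) : hA.sqrt * hA.sqrt = A := by
  rw [sqrt_eq_cfc_sqrt]
  exact CFC.sqrt_mul_sqrt_self A hA.nonneg

open scoped MatrixOrder in
theorem eq_sqrt_of_mul_self_eq (hB : PosSemidef B) (hA : PosSemidef A) (h : B * B = A) :
    B = hA.sqrt := by
  rw [sqrt_eq_cfc_sqrt]
  exact (CFC.sqrt_unique h hB.nonneg).symm

open scoped MatrixOrder in
theorem commute_sqrt {X : Matrix m m 𝕜} (hA : PosSemidef A) (h : Commute A X) :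
    Commute hA.sqrt X := by
  rw [sqrt_eq_cfc_sqrt]
  exact h.cfcₙ_nnreal _

theorem isUnit_sqrt (hA : PosSemidef A) (h : IsUnit A) : IsUnit hA.sqrt :=
  isUnit_of_mul_isUnit_left (hA.sqrt_mul_self ▸ h)

theorem _root_.Matrix.PosDef.isUnit_sqrt (hA : A.PosDef) : IsUnit hA.posSemidef.sqrt :=
  hA.posSemidef.isUnit_sqrt hA.isUnit

end Matrix.PosSemidef

namespace Heron

variable {n : ℕ} {M X Y : Matrix (Fin n) (Fin n) ℂ}

theorem hasPosSpectrum_iff : HasPosSpectrum M ↔ ∀ z ∈ spectrum ℂ M, 0 < z := by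
  simp only [HasPosSpectrum, Complex.pos_iff, eq_comm]

theorem _root_.Matrix.PosDef.hasPosSpectrum (hM : M.PosDef) : HasPosSpectrum M :=
  hasPosSpectrum_iff.mpr fun _ hz ↦
    ((posSemidef_iff_isHermitian_and_spectrum_nonneg.mp hM.posSemidef).2 hz).lt_of_ne
      fun h ↦ (spectrum.zero_notMem_iff ℂ).mpr hM.isUnit (h ▸ hz)

theorem HasPosSpectrum.conjTranspose (hM : HasPosSpectrum M) : HasPosSpectrum Mᴴ := by
  rw [hasPosSpectrum_iff, ← star_eq_conjTranspose, spectrum.map_star]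
  exact fun z hz ↦ star_pos_iff.mp (hasPosSpectrum_iff.mp hM _ hz)

theorem HasPosSpectrum.nonsing_inv_mul_mul (hM : HasPosSpectrum M) (hX : IsUnit X) :
    HasPosSpectrum (X⁻¹ * M * X) := by
  obtain ⟨u, rfl⟩ := hX
  rwa [HasPosSpectrum, ← coe_units_inv, spectrum.units_conjugate']

theorem HasPosSpectrum.eq_of_mul_self_eq (hX : HasPosSpectrum X) (hY : HasPosSpectrum Y)
    (h : X * X = Y * Y) : X = Y := by
  rw [← sub_eq_zero]
  refine eq_zero_of_semiconjBy_of_disjoint_spectrum (X := -Y) (Y := X) ?_ ?_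
  · change (X - Y) * -Y = X * (X - Y)
    rw [mul_sub, h]
    noncomm_ring
  · rw [Set.disjoint_left, ← spectrum.neg_eq]
    intro z hzY hzX
    exact (add_pos (hasPosSpectrum_iff.mp hY _ hzY) (hasPosSpectrum_iff.mp hX _ hzX)).ne'
      (neg_add_cancel z)

theorem IsPrincipalSqrt.unique {S S' : Matrix (Fin n) (Fin n) ℂ} (hS : IsPrincipalSqrt M S)
    (hS' : IsPrincipalSqrt M S') : S = S' :=
  hS.2.eq_of_mul_self_eq hS'.2 (hS.1.trans hS'.1.symm)

theorem IsPrincipalSqrt.conjTranspose {S : Matrix (Fin n) (Fin n) ℂ} (hS : IsPrincipalSqrt M S) :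
    IsPrincipalSqrt Mᴴ Sᴴ :=
  ⟨by rw [← conjTranspose_mul, hS.1], hS.2.conjTranspose⟩

theorem IsPrincipalSqrt.nonsing_inv_mul_mul {S : Matrix (Fin n) (Fin n) ℂ}
    (hS : IsPrincipalSqrt M S) (hX : IsUnit X) :
    IsPrincipalSqrt (X⁻¹ * M * X) (X⁻¹ * S * X) := by
  refine ⟨?_, hS.2.nonsing_inv_mul_mul hX⟩
  have hX' := (isUnit_iff_isUnit_det X).mp hX
  simp only [Matrix.mul_assoc, mul_nonsing_inv_cancel_left _ _ hX', ← hS.1]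

theorem IsPrincipalSqrt.conjTranspose_eq_nonsing_inv_mul_mul
    {A B S : Matrix (Fin n) (Fin n) ℂ} (hS : IsPrincipalSqrt (A * B) S) (hA : A.IsHermitian)
    (hB : B.IsHermitian) (hAu : IsUnit A) :
    Sᴴ = A⁻¹ * S * A := by
  refine hS.conjTranspose.unique ?_
  convert hS.nonsing_inv_mul_mul hAu using 1
  simp only [conjTranspose_mul, hA.eq, hB.eq,
    nonsing_inv_mul_cancel_left _ _ ((isUnit_iff_isUnit_det A).mp hAu)]

theorem posSemidef_absMat (Y : Matrix (Fin n) (Fin n) ℂ) : (absMat Y).PosSemidef :=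
  PosSemidef.posSemidef_sqrt _

theorem absMat_mul_self (Y : Matrix (Fin n) (Fin n) ℂ) : absMat Y * absMat Y = Yᴴ * Y :=
  PosSemidef.sqrt_mul_self _

theorem absMat_eq_of_mul_self_eq {P : Matrix (Fin n) (Fin n) ℂ} (hP : P.PosSemidef)
    (h : P * P = Yᴴ * Y) : absMat Y = P :=
  (hP.eq_sqrt_of_mul_self_eq _ h).symm

theorem eq_absMat_of_two_smul_absMat_eq (h : (2 : ℂ) • absMat Y = Y + Yᴴ) : Y = absMat Y := by
  set P := absMat Y
  set K := Y - P
  have hY : Y = P + K := (add_sub_cancel P Y).symm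
  have hYH : Yᴴ = P - K := by
    rw [two_smul] at h
    rw [eq_sub_of_add_eq' h.symm, hY]
    abel
  have hKH : Kᴴ = -K := by
    rw [conjTranspose_sub, hYH, (posSemidef_absMat Y).1.eq]
    abel
  have hK : K * K = P * K - K * P := by
    have hPP : P * P = (P - K) * (P + K) := by
      rw [← hYH, ← hY]
      exact absMat_mul_self Y
    rw [← sub_eq_zero, ← sub_eq_zero.mpr hPP]
    noncomm_ring
  rw [eq_zero_of_conjTranspose_eq_neg_of_mul_self_eq_commutator hKH hK] at hY
  rw [hY, add_zero]

theorem posDef_of_two_smul_absMat_eq (hY : IsUnit Y.det) (h : (2 : ℂ) • absMat Y = Y + Yᴴ) :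
    Y.PosDef := by
  rw [eq_absMat_of_two_smul_absMat_eq h] at hY ⊢
  exact (posSemidef_absMat Y).posDef_iff_isUnit.mpr ((isUnit_iff_isUnit_det _).mpr hY)

section GeomMean

variable {A B : Matrix (Fin n) (Fin n) ℂ} (hA : A.PosDef) (hB : B.PosDef)

theorem geomMean_posDef : (geomMean hA hB).PosDef := by
  have hR := hA.isUnit_sqrt
  have hRi : IsUnit hA.posSemidef.sqrt⁻¹ := isUnit_nonsing_inv_iff.mpr hR
  have hQ := (sandwich_posSemidef hA.posSemidef.posSemidef_sqrt.isHermitian.inv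
    hB.posSemidef).isUnit_sqrt ((hRi.mul hB.isUnit).mul hRi)
  exact (geomMean_posSemidef hA hB).posDef_iff_isUnit.mpr ((hR.mul hQ).mul hR)

theorem geomMean_mul_self_of_commute (h : Commute A B) :
    geomMean hA hB * geomMean hA hB = A * B := by
  set R := hA.posSemidef.sqrt
  set Q := (sandwich_posSemidef hA.posSemidef.posSemidef_sqrt.isHermitian.inv
    hB.posSemidef).sqrt
  have hR : IsUnit R.det := (isUnit_iff_isUnit_det R).mp hA.isUnit_sqrt
  have hRR : R * R = A := hA.posSemidef.sqrt_mul_self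
  have hQQ : Q * Q = R⁻¹ * B * R⁻¹ := PosSemidef.sqrt_mul_self _
  have hRB : Commute R B := hA.posSemidef.commute_sqrt h
  have hRiR : Commute R⁻¹ R := (nonsing_inv_mul R hR).trans (mul_nonsing_inv R hR).symm
  have hQR : Commute Q R :=
    PosSemidef.commute_sqrt _ ((hRiR.mul_left hRB.symm).mul_left hRiR)
  calc geomMean hA hB * geomMean hA hB = R * R * (Q * Q) * (R * R) := by
        change R * Q * R * (R * Q * R) = _
        simp only [Matrix.mul_assoc, hQR.eq, hQR.left_comm]
    _ = A * B := by
        rw [hQQ]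
        simp only [Matrix.mul_assoc, mul_nonsing_inv_cancel_left _ _ hR,
          nonsing_inv_mul_cancel_left _ _ hR]
        rw [← hRB.eq, ← Matrix.mul_assoc, hRR]

theorem eq_geomMean_of_add_conjTranspose_eq {S : Matrix (Fin n) (Fin n) ℂ}
    (hS : IsPrincipalSqrt (A * B) S) (h : S + Sᴴ = (2 : ℂ) • geomMean hA hB) :
    S = geomMean hA hB := by
  set R := hA.posSemidef.sqrt
  set Q := (sandwich_posSemidef hA.posSemidef.posSemidef_sqrt.isHermitian.inv
    hB.posSemidef).sqrt
  have hR : IsUnit R.det := (isUnit_iff_isUnit_det R).mp hA.isUnit_sqrt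
  have hA' : IsUnit A.det := (isUnit_iff_isUnit_det A).mp hA.isUnit
  have hRR : R * R = A := hA.posSemidef.sqrt_mul_self
  have hRi : (R⁻¹)ᴴ = R⁻¹ := hA.posSemidef.posSemidef_sqrt.isHermitian.inv.eq
  have hQQ : Q * Q = R⁻¹ * B * R⁻¹ := PosSemidef.sqrt_mul_self _
  have hSH : Sᴴ = A⁻¹ * S * A := hS.conjTranspose_eq_nonsing_inv_mul_mul hA.1 hB.1 hA.isUnit
  set Y := R⁻¹ * S * R⁻¹
  have hYH : Yᴴ = R⁻¹ * Sᴴ * R⁻¹ := by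
    simp only [Y, conjTranspose_mul, hRi, Matrix.mul_assoc]
  have hAbs : absMat Y = Q := by
    refine absMat_eq_of_mul_self_eq (PosSemidef.posSemidef_sqrt _) ?_
    have hAinv : ∀ X, R⁻¹ * (R⁻¹ * X) = A⁻¹ * X := fun X ↦ by
      rw [← Matrix.mul_assoc, ← Matrix.mul_inv_rev, hRR]
    have hSS : ∀ X, S * (S * X) = A * (B * X) := fun X ↦ by
      rw [← Matrix.mul_assoc, hS.1, Matrix.mul_assoc]
    rw [hQQ, hYH, hSH]
    simp only [Y, Matrix.mul_assoc, hAinv, mul_nonsing_inv_cancel_left _ _ hA', hSS,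
      nonsing_inv_mul_cancel_left _ _ hA']
  have hY : Y = Q := by
    refine (eq_absMat_of_two_smul_absMat_eq ?_).trans hAbs
    rw [hAbs, hYH]
    have hYsum : Y + R⁻¹ * Sᴴ * R⁻¹ = R⁻¹ * (S + Sᴴ) * R⁻¹ := by
      simp only [Y, Matrix.mul_add, Matrix.add_mul]
    rw [hYsum, h]
    change _ = R⁻¹ * ((2 : ℂ) • (R * Q * R)) * R⁻¹
    simp only [Matrix.mul_smul, Matrix.smul_mul, Matrix.mul_assoc,
      nonsing_inv_mul_cancel_left _ _ hR, mul_nonsing_inv _ hR, Matrix.mul_one]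
  change S = R * Q * R
  simp only [← hY, Y, Matrix.mul_assoc, mul_nonsing_inv_cancel_left _ _ hR,
    nonsing_inv_mul _ hR, Matrix.mul_one]

end GeomMean

/-- equality `a²A + b²B + 2ab(A # B) = W_{a,b}(A,B)` holds iff
`A` and `B` commute; the key step: an invertible `Y` with `2|Y| = Y + Y*` is
positive definite. -/
theorem kubo_heron_equality_iff_commute {n : ℕ}
    (A B S T : Matrix (Fin n) (Fin n) ℂ)
    (hA : A.PosDef) (hB : B.PosDef) (a b : ℝ) (ha : 0 < a) (hb : 0 < b)
    (hS : IsPrincipalSqrt (A * B) S) (hT : IsPrincipalSqrt (B * A) T) :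
    (((a : ℂ) ^ 2) • A + ((b : ℂ) ^ 2) • B + (2 * (a : ℂ) * b) • geomMean hA hB
        = ((a : ℂ) ^ 2) • A + ((b : ℂ) ^ 2) • B + ((a : ℂ) * b) • (S + T)
      ↔ A * B = B * A) ∧
    (∀ Y : Matrix (Fin n) (Fin n) ℂ, IsUnit Y.det →
      (2 : ℂ) • absMat Y = Y + Yᴴ → Y.PosDef) := by
  refine ⟨?_, fun Y hY h ↦ posDef_of_two_smul_absMat_eq hY h⟩
  have hab : (a : ℂ) * b ≠ 0 := by exact_mod_cast (mul_pos ha hb).ne'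
  rw [add_right_inj, show 2 * (a : ℂ) * b = a * b * 2 by ring, mul_smul, smul_right_inj hab]
  constructor
  · intro h
    have hTS : T = Sᴴ := hT.unique <| by
      simpa only [conjTranspose_mul, hA.1.eq, hB.1.eq] using hS.conjTranspose
    have hSG : S = geomMean hA hB :=
      eq_geomMean_of_add_conjTranspose_eq hA hB hS (by rw [← hTS, h])
    have hSH : Sᴴ = S := hSG ▸ (geomMean_posDef hA hB).1.eq
    rw [← hS.1, ← hT.1, hTS, hSH]
  · intro hAB
    have hG : IsPrincipalSqrt (A * B) (geomMean hA hB) :=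
      ⟨geomMean_mul_self_of_commute hA hB hAB, (geomMean_posDef hA hB).hasPosSpectrum⟩
    have hG' : IsPrincipalSqrt (B * A) (geomMean hA hB) := hAB ▸ hG
    rw [hS.unique hG, hT.unique hG', two_smul]

end Heron
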